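/- The supremum of the upper natural density d̄(A) = limsup_{x→∞} |A ∩ [1,x]|/x over all L-primitive sets A ⊆ ℤ_{>1} equals 1; that is, for every ε > 0 there exists an L-primitive set A with upper natural density d̄(A) > 1 − ε. -/

import Mathlib

/-!
`A` is an increasing union of finite blocks. With `V t = ∏_{p < t} (1 - 1/p)`, a sieve
bound shows that `L_a` has density at most `V(P a) / a`, so a finite L-primitive set `F`
with `∑_{a ∈ F} V(P a) / a < δ` rules out a proportion `< δ` of the integers. The next
block consists of the `n ∈ (m, N]`, `N = k m` with `k ≥ 1/δ`, such that `P n ≥ q ≥ k` and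
`n ∉ L_a` for `a ∈ F`. A proper L-multiple of such an `n` is at least `P n · n > q m ≥ N`,
so the block is L-primitive, and it misses at most the `m ≤ δN` integers up to `m`, the
`o(N)` integers `≤ N` with `P n < q`, and the `δN + O(1)` elements of the `L_a`. Its own
contribution to the sum is at most `k V(q)`, which is as small as needed because `∑ 1/p`
diverges, so the construction can be iterated and the union has upper density `≥ 1 - 4δ`.
-/

noncomputable section

/-- `P n` is the largest prime factor of `n`. -/
def P (n : ℕ) : ℕ := n.primeFactors.sup id

/-- `Lset a` is the set of L-multiples of `a`. -/
def Lset (a : ℕ) : Set ℕ :=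
  {m | ∃ b : ℕ, 0 < b ∧ m = b * a ∧ ∀ p : ℕ, p.Prime → p ∣ b → P a ≤ p}

/-- `dL a` is the natural density of `Lset a`. -/
def dL (a : ℕ) : ℝ :=
  (1 / (a : ℝ)) * ∏ p ∈ (Finset.range (P a)).filter Nat.Prime, (1 - 1 / (p : ℝ))

/-- `f A = ∑_{a ∈ A} 1/(a log a)`. -/
def f (A : Set ℕ) : ℝ := ∑' a : A, 1 / (((a : ℕ) : ℝ) * Real.log ((a : ℕ) : ℝ))

/-- A set is primitive if no member divides another. -/
def Primitive (A : Set ℕ) : Prop := ∀ a ∈ A, ∀ b ∈ A, a ≠ b → ¬ a ∣ b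

/-- A set is L-primitive if no member is an L-multiple of another. -/
def LPrimitive (A : Set ℕ) : Prop := ∀ a ∈ A, ∀ a' ∈ A, a ≠ a' → a' ∉ Lset a

/-- `μ x = e^γ log x ∏_{p < x} (1 - 1/p)`. -/
def μ (x : ℝ) : ℝ :=
  Real.exp Real.eulerMascheroniConstant * Real.log x *
    ∏ p ∈ (Finset.range ⌈x⌉₊).filter Nat.Prime, (1 - 1 / (p : ℝ))

/-- `m q = inf_{p ≥ q prime} μ p`. -/
def m (q : ℕ) : ℝ := sInf {y | ∃ p : ℕ, p.Prime ∧ q ≤ p ∧ y = μ p}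

/-- `M x = sup_{y ≥ x} μ y`. -/
def M (x : ℝ) : ℝ := sSup {y | ∃ z : ℝ, x ≤ z ∧ y = μ z}

open Finset Filter Topology

def sieveDensity (t : ℕ) : ℝ := ∏ p ∈ t.primesBelow, (1 - (p : ℝ)⁻¹)

lemma one_sub_inv_prime_nonneg {p : ℕ} (hp : p.Prime) : 0 ≤ 1 - (p : ℝ)⁻¹ :=
  sub_nonneg.mpr (inv_le_one_of_one_le₀ (mod_cast hp.one_le))

lemma sieveDensity_nonneg (t : ℕ) : 0 ≤ sieveDensity t :=
  prod_nonneg fun _ hp => one_sub_inv_prime_nonneg (Nat.prime_of_mem_primesBelow hp)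

lemma sieveDensity_antitone : Antitone sieveDensity := fun _ _ hst =>
  prod_le_prod_of_subset_of_le_one (Nat.primesBelow_mono hst)
    (fun _ hp => one_sub_inv_prime_nonneg (Nat.prime_of_mem_primesBelow hp))
    (fun _ _ _ => sub_le_self _ (by positivity))

lemma sieveDensity_le_exp (t : ℕ) :
    sieveDensity t ≤ Real.exp (-∑ p ∈ t.primesBelow, (p : ℝ)⁻¹) := by
  rw [← sum_neg_distrib, Real.exp_sum]
  refine prod_le_prod (fun _ hp => one_sub_inv_prime_nonneg (Nat.prime_of_mem_primesBelow hp))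
    fun p _ => ?_
  linarith [Real.add_one_le_exp (-(p : ℝ)⁻¹)]

lemma tendsto_sum_primesBelow_inv_atTop :
    Tendsto (fun t : ℕ => ∑ p ∈ t.primesBelow, (p : ℝ)⁻¹) atTop atTop := by
  have hnonneg (n : ℕ) : 0 ≤ {p | p.Prime}.indicator (fun n : ℕ => 1 / (n : ℝ)) n :=
    Set.indicator_nonneg (fun _ _ => by positivity) n
  convert (not_summable_iff_tendsto_nat_atTop_of_nonneg hnonneg).mp
    not_summable_one_div_on_primes using 2 with t
  rw [Nat.primesBelow, sum_filter]
  simp [Set.indicator]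

lemma tendsto_sieveDensity_atTop : Tendsto sieveDensity atTop (𝓝 0) :=
  squeeze_zero sieveDensity_nonneg sieveDensity_le_exp
    (Real.tendsto_exp_neg_atTop_nhds_zero.comp tendsto_sum_primesBelow_inv_atTop)

lemma totient_prod_primesBelow (t : ℕ) :
    ((∏ p ∈ t.primesBelow, p).totient : ℝ) =
      (∏ p ∈ t.primesBelow, p : ℕ) * sieveDensity t := by
  have h := Nat.totient_eq_mul_prod_factors (∏ p ∈ t.primesBelow, p)
  rw [Nat.primeFactors_prod fun _ hp => Nat.prime_of_mem_primesBelow hp] at h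
  rw [sieveDensity]
  simpa using congrArg (Rat.cast : ℚ → ℝ) h

lemma le_P_of_prime_dvd {p n : ℕ} (hp : p.Prime) (hpn : p ∣ n) (hn : n ≠ 0) : p ≤ P n :=
  le_sup (f := id) (Nat.mem_primeFactors.mpr ⟨hp, hpn, hn⟩)

lemma mem_smoothNumbers_of_P_lt {q n : ℕ} (hn : n ≠ 0) (h : P n < q) :
    n ∈ Nat.smoothNumbers q :=
  Nat.mem_smoothNumbers'.mpr fun _ hp hpn => (le_P_of_prime_dvd hp hpn hn).trans_lt h

lemma le_of_mem_Lset {a n : ℕ} (h : n ∈ Lset a) : a ≤ n := by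
  obtain ⟨b, hb, rfl, -⟩ := h
  exact Nat.le_mul_of_pos_left a hb

lemma P_mul_le_of_mem_Lset {a n : ℕ} (h : n ∈ Lset a) (hne : a ≠ n) : P a * a ≤ n := by
  obtain ⟨b, hb, rfl, hbP⟩ := h
  obtain ⟨p, hp, hpb⟩ := Nat.exists_prime_and_dvd (show b ≠ 1 by rintro rfl; simp at hne)
  exact Nat.mul_le_mul_right a ((hbP p hp hpb).trans (Nat.le_of_dvd hb hpb))

lemma coprime_prod_primesBelow {t b : ℕ} (h : ∀ p, p.Prime → p ∣ b → t ≤ p) :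
    Nat.Coprime (∏ p ∈ t.primesBelow, p) b :=
  Nat.Coprime.prod_left fun p hp =>
    (Nat.Prime.coprime_iff_not_dvd (Nat.prime_of_mem_primesBelow hp)).mpr fun hpb =>
      (Nat.lt_of_mem_primesBelow hp).not_ge (h p (Nat.prime_of_mem_primesBelow hp) hpb)

section Counting

open scoped Classical

lemma card_Lset_le_totient_mul (a N : ℕ) (ha : 0 < a) :
    #{n ∈ Ioc 0 N | n ∈ Lset a} ≤
      (∏ p ∈ (P a).primesBelow, p).totient * (N / a / ∏ p ∈ (P a).primesBelow, p + 1) := by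
  set Q := ∏ p ∈ (P a).primesBelow, p
  have hsub : {n ∈ Ioc 0 N | n ∈ Lset a} ⊆
      {b ∈ Ico 1 (1 + N / a) | Q.Coprime b}.image (· * a) := by
    intro n hn
    obtain ⟨hn, b, hb, rfl, hbP⟩ := mem_filter.mp hn
    have hbN : b ≤ N / a := (Nat.le_div_iff_mul_le ha).mpr (mem_Ioc.mp hn).2
    exact mem_image.mpr
      ⟨b, mem_filter.mpr ⟨mem_Ico.mpr ⟨hb, by omega⟩, coprime_prod_primesBelow hbP⟩, rfl⟩
  calc #{n ∈ Ioc 0 N | n ∈ Lset a}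
      ≤ #({b ∈ Ico 1 (1 + N / a) | Q.Coprime b}.image (· * a)) := card_le_card hsub
    _ ≤ #{b ∈ Ico 1 (1 + N / a) | Q.Coprime b} := card_image_le
    _ ≤ Q.totient * (N / a / Q + 1) :=
      Nat.Ico_filter_coprime_le 1 _
        (prod_ne_zero_iff.mpr fun _ hp => (Nat.prime_of_mem_primesBelow hp).ne_zero)

lemma card_Lset_le (a N : ℕ) (ha : 0 < a) :
    (#{n ∈ Ioc 0 N | n ∈ Lset a} : ℝ) ≤
      N / a * sieveDensity (P a) + (∏ p ∈ (P a).primesBelow, p : ℕ) := by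
  set Q := ∏ p ∈ (P a).primesBelow, p
  have hQ : (0 : ℝ) < Q :=
    mod_cast prod_pos fun _ hp => (Nat.prime_of_mem_primesBelow hp).pos
  have hdiv : ((N / a / Q : ℕ) : ℝ) ≤ N / a / Q :=
    Nat.cast_div_le.trans (div_le_div_of_nonneg_right Nat.cast_div_le hQ.le)
  calc (#{n ∈ Ioc 0 N | n ∈ Lset a} : ℝ)
      ≤ Q.totient * ((N / a / Q : ℕ) + 1 : ℝ) := mod_cast card_Lset_le_totient_mul a N ha
    _ ≤ Q.totient * (N / a / Q) + Q := by
      rw [mul_add, mul_one]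
      gcongr
      exact_mod_cast Nat.totient_le Q
    _ = N / a * sieveDensity (P a) + Q := by
      rw [show (Q.totient : ℝ) = Q * sieveDensity (P a) from totient_prod_primesBelow _]
      field_simp

lemma eventually_card_P_lt_le (q : ℕ) {δ : ℝ} (hδ : 0 < δ) :
    ∀ᶠ N : ℕ in atTop, (#{n ∈ Ioc 0 N | P n < q} : ℝ) ≤ δ * N := by
  set C := 2 ^ #q.primesBelow
  obtain ⟨K, hK⟩ := exists_nat_ge ((C : ℝ) / δ)
  filter_upwards [eventually_ge_atTop (K * K)] with N hN
  have hC : (C : ℝ) ≤ δ * N.sqrt :=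
    (div_le_iff₀' hδ).mp (hK.trans (mod_cast Nat.le_sqrt.mpr hN))
  have hsub : {n ∈ Ioc 0 N | P n < q} ⊆ Nat.smoothNumbersUpTo N q := fun n hn => by
    obtain ⟨hn, hnq⟩ := mem_filter.mp hn
    exact Nat.mem_smoothNumbersUpTo.mpr
      ⟨(mem_Ioc.mp hn).2, mem_smoothNumbers_of_P_lt (mem_Ioc.mp hn).1.ne' hnq⟩
  calc (#{n ∈ Ioc 0 N | P n < q} : ℝ)
      ≤ #(Nat.smoothNumbersUpTo N q) := mod_cast card_le_card hsub
    _ ≤ C * N.sqrt := mod_cast Nat.smoothNumbersUpTo_card_le N q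
    _ ≤ δ * N.sqrt * N.sqrt := by gcongr
    _ ≤ δ * N := by
      rw [mul_assoc]
      gcongr
      exact_mod_cast Nat.sqrt_le N

end Counting

lemma lPrimitive_iUnion_of_directed {ι : Sort*} {F : ι → Set ℕ} (hdir : Directed (· ⊆ ·) F)
    (hF : ∀ i, LPrimitive (F i)) : LPrimitive (⋃ i, F i) := by
  intro a ha a' ha'
  obtain ⟨i, hi⟩ := Set.mem_iUnion.mp ha
  obtain ⟨j, hj⟩ := Set.mem_iUnion.mp ha'
  obtain ⟨k, hik, hjk⟩ := hdir i j
  exact hF k a (hik hi) a' (hjk hj)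

def Lmass (F : Finset ℕ) : ℝ := ∑ a ∈ F, sieveDensity (P a) / a

section Block

open scoped Classical

lemma sum_card_Lset_le {F : Finset ℕ} (hF : ∀ a ∈ F, 0 < a) (N : ℕ) :
    (∑ a ∈ F, #{n ∈ Ioc 0 N | n ∈ Lset a} : ℝ) ≤
      N * Lmass F + ∑ a ∈ F, ((∏ p ∈ (P a).primesBelow, p : ℕ) : ℝ) := by
  rw [Lmass, mul_sum, ← sum_add_distrib]
  refine sum_le_sum fun a ha => (card_Lset_le a N (hF a ha)).trans_eq ?_
  ring

def block (F : Finset ℕ) (q m N : ℕ) : Finset ℕ :=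
  {n ∈ Ioc m N | q ≤ P n ∧ ∀ a ∈ F, n ∉ Lset a}

variable {F : Finset ℕ} {q m N : ℕ}

lemma mem_block {n : ℕ} :
    n ∈ block F q m N ↔ (m < n ∧ n ≤ N) ∧ q ≤ P n ∧ ∀ a ∈ F, n ∉ Lset a := by
  rw [block, mem_filter, mem_Ioc]

lemma lPrimitive_union_block (hF : LPrimitive F) (hFm : ∀ a ∈ F, a ≤ m) (hN : N ≤ q * m) :
    LPrimitive ↑(F ∪ block F q m N) := by
  intro a ha a' ha' hne hL
  simp only [coe_union, Set.mem_union, mem_coe] at ha ha'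
  rcases ha' with ha' | ha' <;> rcases ha with ha | ha
  · exact hF a ha a' ha' hne hL
  · have := le_of_mem_Lset hL
    have := hFm a' ha'
    have := (mem_block.mp ha).1.1
    omega
  · exact (mem_block.mp ha').2.2 a ha hL
  · obtain ⟨⟨ham, -⟩, hqa, -⟩ := mem_block.mp ha
    obtain ⟨⟨hma', ha'N⟩, -⟩ := mem_block.mp ha'
    have := P_mul_le_of_mem_Lset hL hne
    have : q * (m + 1) ≤ P a * a := Nat.mul_le_mul hqa ham
    rw [Nat.mul_succ] at this
    obtain rfl : q = 0 := by omega
    omega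

lemma Lmass_block_le (hm : 0 < m) : Lmass (block F q m N) ≤ N / m * sieveDensity q := by
  have hcard : #(block F q m N) ≤ N := (card_filter_le _ _).trans (by simp)
  calc Lmass (block F q m N)
      ≤ ∑ _a ∈ block F q m N, sieveDensity q / m := sum_le_sum fun a ha => by
        obtain ⟨⟨hma, -⟩, hqa, -⟩ := mem_block.mp ha
        exact div_le_div₀ (sieveDensity_nonneg q) (sieveDensity_antitone hqa) (by positivity)
          (by exact_mod_cast hma.le)
    _ = #(block F q m N) * (sieveDensity q / m) := by rw [sum_const, nsmul_eq_mul]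
    _ ≤ N * (sieveDensity q / m) := by
      gcongr
      exact div_nonneg (sieveDensity_nonneg q) m.cast_nonneg
    _ = N / m * sieveDensity q := by ring

lemma le_card_block :
    N ≤ m + #{n ∈ Ioc 0 N | P n < q} + ∑ a ∈ F, #{n ∈ Ioc 0 N | n ∈ Lset a} +
      #(block F q m N) := by
  set S := {n ∈ Ioc 0 N | P n < q}
  set B := F.biUnion fun a => {n ∈ Ioc 0 N | n ∈ Lset a}
  have hcover : Ioc 0 N ⊆ Ioc 0 m ∪ S ∪ B ∪ block F q m N := by
    intro n hn
    simp only [S, B, mem_union, mem_filter, mem_biUnion, mem_block, mem_Ioc] at hn ⊢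
    grind
  have h1 := card_union_le (Ioc 0 m ∪ S ∪ B) (block F q m N)
  have h2 := card_union_le (Ioc 0 m ∪ S) B
  have h3 := card_union_le (Ioc 0 m) S
  have h4 : #B ≤ _ := card_biUnion_le
  have h5 := card_le_card hcover
  simp only [Nat.card_Ioc, Nat.sub_zero] at h1 h2 h3 h5
  omega

end Block

lemma exists_block {δ θ : ℝ} (hδ : 0 < δ) (hθ : 0 < θ) {F : Finset ℕ} {n₀ : ℕ}
    (hF : LPrimitive F) (hFpos : ∀ a ∈ F, 0 < a) (hFn₀ : ∀ a ∈ F, a ≤ n₀)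
    (hFmass : Lmass F ≤ δ) :
    ∃ N : ℕ, ∃ G : Finset ℕ, n₀ < N ∧ (∀ a ∈ G, 1 < a ∧ n₀ < a ∧ a ≤ N) ∧
      LPrimitive ↑(F ∪ G) ∧ Lmass G ≤ θ ∧ (1 - 4 * δ) * N ≤ #G := by
  classical
  obtain ⟨k, hk⟩ := exists_nat_ge δ⁻¹
  have hk0 : 0 < k := by exact_mod_cast (inv_pos.mpr hδ).trans_le hk
  have hδk : 1 ≤ δ * k := by rwa [inv_le_iff_one_le_mul₀' hδ] at hk
  obtain ⟨q, hkq, hq⟩ := ((eventually_ge_atTop k).and (tendsto_sieveDensity_atTop.eventually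
    (ge_mem_nhds (show (0 : ℝ) < θ / k by positivity)))).exists
  set C : ℝ := ∑ a ∈ F, ((∏ p ∈ (P a).primesBelow, p : ℕ) : ℝ)
  have hkm : Tendsto (fun m : ℕ => k * m) atTop atTop :=
    tendsto_atTop_mono (fun m => Nat.le_mul_of_pos_left m hk0) tendsto_id
  obtain ⟨m, hm, hsmooth, hC⟩ := ((eventually_gt_atTop (max 1 n₀)).and (hkm.eventually
    ((eventually_card_P_lt_le q hδ).and
      (tendsto_natCast_atTop_atTop.eventually_ge_atTop (C / δ))))).exists
  set N := k * m
  have hm0 : (0 : ℝ) < m := by exact_mod_cast (by omega : 0 < m)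
  have hmN' : m ≤ N := Nat.le_mul_of_pos_left m hk0
  have hmN : (m : ℝ) ≤ δ * N := by
    push_cast [N]
    nlinarith [(m.cast_nonneg : (0 : ℝ) ≤ m)]
  refine ⟨N, block F q m N, by omega, fun a ha => ?_,
    lPrimitive_union_block hF (fun a ha => (hFn₀ a ha).trans (by omega))
      (Nat.mul_le_mul_right m hkq), ?_, ?_⟩
  · have := (mem_block.mp ha).1
    omega
  · calc Lmass (block F q m N) ≤ N / m * sieveDensity q := Lmass_block_le (by omega)
      _ = k * sieveDensity q := by push_cast [N]; field_simp
      _ ≤ k * (θ / k) := by gcongr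
      _ = θ := by field_simp
  · have hcover : (N : ℝ) ≤ m + #{n ∈ Ioc 0 N | P n < q} +
        ∑ a ∈ F, #{n ∈ Ioc 0 N | n ∈ Lset a} + #(block F q m N) := mod_cast le_card_block
    have hL : (∑ a ∈ F, #{n ∈ Ioc 0 N | n ∈ Lset a} : ℝ) ≤ N * Lmass F + C :=
      sum_card_Lset_le hFpos N
    push_cast at hcover
    have hFN : N * Lmass F ≤ δ * N := by
      rw [mul_comm]; exact mul_le_mul_of_nonneg_right hFmass N.cast_nonneg
    have hCN : C ≤ δ * N := (div_le_iff₀' hδ).mp hC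
    linarith

def Admissible (δ : ℝ) (s : Finset ℕ × ℕ) : Prop :=
  (∀ a ∈ s.1, 1 < a ∧ a ≤ s.2) ∧ LPrimitive ↑s.1 ∧ Lmass s.1 < δ

lemma Admissible.exists_extension {δ : ℝ} (hδ : 0 < δ) {s : Finset ℕ × ℕ}
    (hs : Admissible δ s) :
    ∃ t, Admissible δ t ∧ s.1 ⊆ t.1 ∧ s.2 < t.2 ∧ (1 - 4 * δ) * t.2 ≤ #t.1 := by
  obtain ⟨hsN, hsprim, hsmass⟩ := hs
  obtain ⟨N, G, hN, hG, hprim, hGmass, hcard⟩ :=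
    exists_block hδ (θ := (δ - Lmass s.1) / 2) (by linarith) hsprim
      (fun a ha => by have := (hsN a ha).1; omega) (fun a ha => (hsN a ha).2) hsmass.le
  have hdisj : Disjoint s.1 G := disjoint_left.mpr fun a ha haG => by
    have := (hsN a ha).2
    have := (hG a haG).2.1
    omega
  refine ⟨(s.1 ∪ G, N), ⟨fun a ha => ?_, hprim, ?_⟩, subset_union_left, hN,
    hcard.trans (mod_cast card_le_card subset_union_right)⟩
  · rcases mem_union.mp ha with ha | ha
    · exact ⟨(hsN a ha).1, (hsN a ha).2.trans hN.le⟩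
    · exact ⟨(hG a ha).1, (hG a ha).2.2⟩
  · rw [Lmass, sum_union hdisj]
    change Lmass s.1 + Lmass G < δ
    linarith

lemma exists_seq_of_forall_exists_rel {α : Type*} {p : α → Prop} {r : α → α → Prop} {x : α}
    (hx : p x) (h : ∀ x, p x → ∃ y, p y ∧ r x y) :
    ∃ s : ℕ → α, ∀ n, p (s n) ∧ r (s n) (s (n + 1)) := by
  choose g hg using h
  let t (n : ℕ) : {x // p x} := (fun y : {x // p x} => ⟨g y.1 y.2, (hg _ _).1⟩)^[n] ⟨x, hx⟩
  refine ⟨fun n => (t n).1, fun n => ⟨(t n).2, ?_⟩⟩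
  simp only [t, Function.iterate_succ_apply']
  exact (hg _ _).2

lemma card_le_sum_indicator {α : Type*} {A : Set α} {F S : Finset α} (hFA : ↑F ⊆ A)
    (hFS : F ⊆ S) : (#F : ℝ) ≤ ∑ n ∈ S, A.indicator (fun _ => (1 : ℝ)) n := by
  calc (#F : ℝ) = ∑ n ∈ F, A.indicator (fun _ => (1 : ℝ)) n := by
        rw [sum_congr rfl fun n hn => Set.indicator_of_mem (hFA hn) _]
        simp
    _ ≤ ∑ n ∈ S, A.indicator (fun _ => (1 : ℝ)) n :=
        sum_le_sum_of_subset_of_nonneg hFS fun _ _ _ =>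
          Set.indicator_nonneg (fun _ _ => zero_le_one) _

lemma exists_lPrimitive_frequently_le_sum_indicator {δ : ℝ} (hδ : 0 < δ) :
    ∃ A : Set ℕ, (∀ a ∈ A, 1 < a) ∧ LPrimitive A ∧ ∃ᶠ N : ℕ in atTop,
      (1 - 4 * δ) * N ≤ ∑ n ∈ range (N + 1), A.indicator (fun _ => (1 : ℝ)) n := by
  obtain ⟨s, hs⟩ := exists_seq_of_forall_exists_rel (x := (∅, 0))
    (by simp [Admissible, Lmass, LPrimitive, hδ]) fun _ => Admissible.exists_extension hδ
  have hmono : Monotone fun k => ((s k).1 : Set ℕ) :=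
    monotone_nat_of_le_succ fun k => coe_subset.mpr (hs k).2.1
  have hN : Tendsto (fun k => (s (k + 1)).2) atTop atTop :=
    (strictMono_nat_of_lt_succ fun k => (hs k).2.2.1).tendsto_atTop.comp
      (tendsto_add_atTop_nat 1)
  refine ⟨⋃ k, ((s k).1 : Set ℕ), fun a ha => ?_,
    lPrimitive_iUnion_of_directed hmono.directed_le fun k => (hs k).1.2.1,
    hN.frequently (Frequently.of_forall fun k => ?_)⟩
  · obtain ⟨k, hk⟩ := Set.mem_iUnion.mp ha
    exact ((hs k).1.1 a hk).1
  · exact (hs k).2.2.2.trans <| card_le_sum_indicator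
      (Set.subset_iUnion (fun k => ((s k).1 : Set ℕ)) (k + 1))
      fun a ha => mem_range.mpr (Nat.lt_succ_of_le ((hs (k + 1)).1.1 a ha).2)

lemma le_limsup_of_frequently_le_sum_indicator {A : Set ℕ} {c : ℝ}
    (h : ∃ᶠ N : ℕ in atTop, c * N ≤ ∑ n ∈ range (N + 1), A.indicator (fun _ => (1 : ℝ)) n) :
    c ≤ limsup (fun x : ℝ => (1 / x) *
      ∑ n ∈ range (⌊x⌋₊ + 1), A.indicator (fun _ => (1 : ℝ)) n) atTop := by
  refine le_limsup_of_frequently_le (tendsto_natCast_atTop_atTop.frequently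
    ((h.and_eventually (eventually_gt_atTop 0)).mono fun N ⟨hN, hN0⟩ => ?_))
    (isBoundedUnder_of_eventually_le (a := 2) ?_)
  · rw [Nat.floor_natCast, one_div, le_inv_mul_iff₀ (by exact_mod_cast hN0)]
    linarith
  · filter_upwards [eventually_ge_atTop 1] with x hx
    have hsum : ∑ n ∈ range (⌊x⌋₊ + 1), A.indicator (fun _ => (1 : ℝ)) n ≤ ⌊x⌋₊ + 1 := by
      simpa using sum_le_card_nsmul (range (⌊x⌋₊ + 1)) (A.indicator fun _ => (1 : ℝ)) 1
        fun n _ => Set.indicator_le_self' (fun _ _ => zero_le_one) n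
    rw [one_div, inv_mul_le_iff₀ (by linarith)]
    linarith [Nat.floor_le (by linarith : (0 : ℝ) ≤ x)]

/-- Proposition 5.2 (Besicovitch-type result): the supremum of the upper natural
density over all L-primitive sets equals 1; i.e., for every `ε > 0` there is an
L-primitive set of upper natural density exceeding `1 - ε`. -/
theorem LPrimitive_upper_density_sup_one :
    ∀ ε > (0 : ℝ), ∃ A : Set ℕ, (∀ a ∈ A, 1 < a) ∧ LPrimitive A ∧
      1 - ε < Filter.limsup
        (fun x : ℝ => (1 / x) *
          ∑ n ∈ Finset.range (⌊x⌋₊ + 1), Set.indicator A (fun _ => (1 : ℝ)) n)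
        Filter.atTop := by
  intro ε hε
  obtain ⟨A, hA1, hA, hfreq⟩ := exists_lPrimitive_frequently_le_sum_indicator (δ := ε / 8)
    (by positivity)
  exact ⟨A, hA1, hA, (by linarith : 1 - ε < 1 - 4 * (ε / 8)).trans_le
    (le_limsup_of_frequently_le_sum_indicator hfreq)⟩
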